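/- If C is a sum closed, rc-invariant permutation class, then for every n ≥ 0 the map σ ↦ rc(σ) ⊕ σ is an injection from C_n into C^rc_{2n}; in particular |C_n| ≤ |C^rc_{2n}|. -/

import Mathlib

open Filter Topology

/-- `π` contains `σ` as a pattern. -/
def PermContains {n m : ℕ} (π : Equiv.Perm (Fin n)) (σ : Equiv.Perm (Fin m)) : Prop :=
  ∃ f : Fin m → Fin n, StrictMono f ∧ ∀ i j : Fin m, σ i < σ j ↔ π (f i) < π (f j)

/-- A permutation class: downward closed under pattern containment. -/
def IsPermClass (C : ∀ n : ℕ, Set (Equiv.Perm (Fin n))) : Prop :=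
  ∀ (m n : ℕ) (σ : Equiv.Perm (Fin m)) (π : Equiv.Perm (Fin n)),
    π ∈ C n → PermContains π σ → σ ∈ C m

/-- The reverse–complement of a permutation. -/
def rcPerm {n : ℕ} (π : Equiv.Perm (Fin n)) : Equiv.Perm (Fin n) :=
  (Fin.revPerm.trans π).trans Fin.revPerm

/-- A class is rc-invariant if `rc(C) = C`. -/
def RCInvariant (C : ∀ n : ℕ, Set (Equiv.Perm (Fin n))) : Prop :=
  ∀ n : ℕ, rcPerm '' (C n) = C n

/-- `|C_n|`. -/
noncomputable def classCount (C : ∀ n : ℕ, Set (Equiv.Perm (Fin n))) (n : ℕ) : ℕ :=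
  (C n).ncard

/-- `|C^rc_{2n}|`, the number of centrosymmetric permutations of size `2n` in `C`. -/
noncomputable def rcCount (C : ∀ n : ℕ, Set (Equiv.Perm (Fin n))) (n : ℕ) : ℕ :=
  {π ∈ C (2 * n) | rcPerm π = π}.ncard

/-- The sequence `n ↦ (f n)^(1/n)`, valued in `ℝ≥0∞`. -/
noncomputable def growthSeq (f : ℕ → ℕ) (n : ℕ) : ENNReal :=
  (f n : ENNReal) ^ ((n : ℝ)⁻¹)

/-- The direct sum `σ ⊕ τ` of two permutations. -/
def sumPerm {a b : ℕ} (σ : Equiv.Perm (Fin a)) (τ : Equiv.Perm (Fin b)) :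
    Equiv.Perm (Fin (a + b)) :=
  (finSumFinEquiv.symm.trans (Equiv.sumCongr σ τ)).trans finSumFinEquiv

/-- A class is sum closed if it is closed under `⊕`. -/
def SumClosed (C : ∀ n : ℕ, Set (Equiv.Perm (Fin n))) : Prop :=
  ∀ (a b : ℕ) (σ : Equiv.Perm (Fin a)) (τ : Equiv.Perm (Fin b)),
    σ ∈ C a → τ ∈ C b → sumPerm σ τ ∈ C (a + b)

/-- Transport a permutation along an equality of sizes. -/
def permCast {m n : ℕ} (h : m = n) (π : Equiv.Perm (Fin m)) : Equiv.Perm (Fin n) :=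
  ((finCongr h).symm.trans π).trans (finCongr h)

/-- A permutation is sum-indecomposable if it is not the sum of two permutations of
nonzero size. -/
def SumIndecomposable {n : ℕ} (π : Equiv.Perm (Fin n)) : Prop :=
  ¬ ∃ (a b : ℕ) (σ : Equiv.Perm (Fin a)) (τ : Equiv.Perm (Fin b)) (h : a + b = n),
      0 < a ∧ 0 < b ∧ π = permCast h (sumPerm σ τ)

/-- `|ind(C)_n|`, the number of sum-indecomposable permutations of size `n` in `C`. -/
noncomputable def indCount (C : ∀ n : ℕ, Set (Equiv.Perm (Fin n))) (n : ℕ) : ℕ :=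
  {π ∈ C n | SumIndecomposable π}.ncard

/-- `|ind(C)^rc_{2k}|`, the number of centrosymmetric sum-indecomposable permutations of
size `2k` in `C`. -/
noncomputable def indRcCount (C : ∀ n : ℕ, Set (Equiv.Perm (Fin n))) (k : ℕ) : ℕ :=
  {π ∈ C (2 * k) | SumIndecomposable π ∧ rcPerm π = π}.ncard

/-! Reverse–complement reverses the order of the blocks of a sum, `rc(σ ⊕ τ) = rc τ ⊕ rc σ`,
and is an involution; hence `rc(rc σ ⊕ σ) = rc σ ⊕ σ`. Rc-invariance puts `rc σ` in `C`, sum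
closure then puts `rc σ ⊕ σ` in `C`, and `σ` is recovered as the upper block of the sum. -/

theorem sumPerm_inj {a b : ℕ} {σ σ' : Equiv.Perm (Fin a)} {τ τ' : Equiv.Perm (Fin b)} :
    sumPerm σ τ = sumPerm σ' τ' ↔ σ = σ' ∧ τ = τ' := by
  refine ⟨fun h => ?_, fun ⟨hσ, hτ⟩ => hσ ▸ hτ ▸ rfl⟩
  simpa [Prod.ext_iff] using Equiv.Perm.sumCongrHom_injective (a₁ := (σ, τ)) (a₂ := (σ', τ'))
    (finSumFinEquiv.permCongr.injective h)

theorem sumPerm_apply_castAdd {a b : ℕ} (σ : Equiv.Perm (Fin a)) (τ : Equiv.Perm (Fin b))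
    (i : Fin a) : sumPerm σ τ (Fin.castAdd b i) = Fin.castAdd b (σ i) := by
  simp [sumPerm]

theorem sumPerm_apply_natAdd {a b : ℕ} (σ : Equiv.Perm (Fin a)) (τ : Equiv.Perm (Fin b))
    (i : Fin b) : sumPerm σ τ (Fin.natAdd a i) = Fin.natAdd a (τ i) := by
  simp [sumPerm]

theorem permCast_rfl {n : ℕ} (π : Equiv.Perm (Fin n)) : permCast rfl π = π :=
  rfl

theorem permCast_injective {m n : ℕ} (h : m = n) : Function.Injective (permCast h) :=
  (finCongr h).permCongr.injective

theorem permCast_mem {C : ∀ n : ℕ, Set (Equiv.Perm (Fin n))} {m n : ℕ} (h : m = n)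
    {π : Equiv.Perm (Fin m)} (hπ : π ∈ C m) : permCast h π ∈ C n := by
  subst h
  exact hπ

@[simp]
theorem rcPerm_apply {n : ℕ} (π : Equiv.Perm (Fin n)) (i : Fin n) :
    rcPerm π i = Fin.rev (π (Fin.rev i)) :=
  rfl

@[simp]
theorem rcPerm_rcPerm {n : ℕ} (π : Equiv.Perm (Fin n)) : rcPerm (rcPerm π) = π := by
  ext i
  simp

theorem rcPerm_permCast {m n : ℕ} (h : m = n) (π : Equiv.Perm (Fin m)) :
    rcPerm (permCast h π) = permCast h (rcPerm π) := by
  subst h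
  rfl

theorem rcPerm_mem {C : ∀ n : ℕ, Set (Equiv.Perm (Fin n))} (hrc : RCInvariant C) {n : ℕ}
    {π : Equiv.Perm (Fin n)} (hπ : π ∈ C n) : rcPerm π ∈ C n :=
  hrc n ▸ Set.mem_image_of_mem rcPerm hπ

theorem rcPerm_sumPerm {a b : ℕ} (σ : Equiv.Perm (Fin a)) (τ : Equiv.Perm (Fin b)) :
    rcPerm (sumPerm σ τ) = permCast (Nat.add_comm b a) (sumPerm (rcPerm τ) (rcPerm σ)) := by
  refine Equiv.ext fun i => ?_
  rw [← Fin.rev_rev i]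
  induction i.rev using Fin.addCases with
  | left j =>
    have hj : Fin.cast (Nat.add_comm a b) (Fin.castAdd b j).rev = Fin.natAdd b j.rev :=
      Fin.ext (by simp [Fin.val_rev]; omega)
    simp only [rcPerm_apply, Fin.rev_rev, sumPerm_apply_castAdd, permCast, Equiv.trans_apply,
      finCongr_symm, finCongr_apply, hj, sumPerm_apply_natAdd]
    exact Fin.ext (by simp [Fin.val_rev]; omega)
  | right j =>
    have hj : Fin.cast (Nat.add_comm a b) (Fin.natAdd a j).rev = Fin.castAdd a j.rev :=
      Fin.ext (by simp [Fin.val_rev]; omega)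
    simp only [rcPerm_apply, Fin.rev_rev, sumPerm_apply_natAdd, permCast, Equiv.trans_apply,
      finCongr_symm, finCongr_apply, hj, sumPerm_apply_castAdd]
    exact Fin.ext (by simp [Fin.val_rev]; omega)

theorem stmt10_general (C : ∀ n : ℕ, Set (Equiv.Perm (Fin n)))
    (hsum : SumClosed C) (hrc : RCInvariant C) (n : ℕ) :
    Set.InjOn (fun σ : Equiv.Perm (Fin n) =>
        permCast (two_mul n).symm (sumPerm (rcPerm σ) σ)) (C n) ∧
    (∀ σ ∈ C n, permCast (two_mul n).symm (sumPerm (rcPerm σ) σ) ∈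
        {π ∈ C (2 * n) | rcPerm π = π}) ∧
    classCount C n ≤ rcCount C n := by
  have maps_to : ∀ σ ∈ C n, permCast (two_mul n).symm (sumPerm (rcPerm σ) σ) ∈
      {π ∈ C (2 * n) | rcPerm π = π} := fun σ hσ =>
    ⟨permCast_mem _ (hsum n n _ _ (rcPerm_mem hrc hσ) hσ),
      by rw [rcPerm_permCast, rcPerm_sumPerm, rcPerm_rcPerm, permCast_rfl]⟩
  have inj_on : Set.InjOn (fun σ : Equiv.Perm (Fin n) =>
      permCast (two_mul n).symm (sumPerm (rcPerm σ) σ)) (C n) := fun σ _ τ _ h =>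
    (sumPerm_inj.1 (permCast_injective _ h)).2
  exact ⟨inj_on, maps_to, Set.ncard_le_ncard_of_injOn _ maps_to inj_on (Set.toFinite _)⟩

theorem stmt10 (C : ∀ n : ℕ, Set (Equiv.Perm (Fin n))) (hC : IsPermClass C)
    (hsum : SumClosed C) (hrc : RCInvariant C) (n : ℕ) :
    Set.InjOn (fun σ : Equiv.Perm (Fin n) =>
        permCast (two_mul n).symm (sumPerm (rcPerm σ) σ)) (C n) ∧
    (∀ σ ∈ C n, permCast (two_mul n).symm (sumPerm (rcPerm σ) σ) ∈
        {π ∈ C (2 * n) | rcPerm π = π}) ∧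
    classCount C n ≤ rcCount C n :=
  stmt10_general C hsum hrc n
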